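/- arXiv:math/0405070 — 5 statements merged into one kernel-verified Lean document; each statement's English description precedes it below -/
import Mathlib

section
/- Let α∈(0,2), H∈(0,1), κ=H−1/α, and t∈ℝ. Let λ be a Borel measure on ℝ with λ(ℝ)<∞ and ∫_ℝ |z|^α λ(dz) < ∞. Then ∫_ℝ ∫₀^{2π} ∫_ℝ | cos(v + z·ln|t+u|)·(t+u)₊^κ − cos(v + z·ln|u|)·u₊^κ |^α du dv λ(dz) < ∞, where the integrand is defined for u∉{0,−t} (a set of full Lebesgue measure). -/
open MeasureTheory Real

/-- `u₊^κ`: equals `u^κ` for `u > 0` and `0` for `u ≤ 0`; for `κ = 0` it is the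
indicator of `(0,∞)` (via `rpow`). -/
noncomputable def pPow (κ u : ℝ) : ℝ := if 0 < u then u ^ κ else 0

/-!
With `X = (t+u)₊^κ`, `Y = u₊^κ` and `A`, `B` the two cosine arguments, split the integrand as
`cos A · (X - Y) + (cos A - cos B) · Y`. As `cos` is bounded by `1` and `1`-Lipschitz, the
integrand is at most `2 max(1, |z|)` times `|X - Y| + min(1, |log|t+u| - log|u||) · Y`, uniformly
in `v`. So the triple integral is bounded by a constant times `∫ (1 + |z|^α) dλ` times the
`u`-integral of the `α`-th power of this majorant. Near `u = 0` and `u = -t` the majorant is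
`O((t+u)₊^κ + u₊^κ)`, and `ακ = αH - 1 > -1`; for large `u` the mean value theorem makes it
`O(|t| u^(κ-1))`, and `α(κ - 1) = αH - 1 - α < -1`.
-/

lemma pPow_of_pos {u : ℝ} (hu : 0 < u) (κ : ℝ) : pPow κ u = u ^ κ := if_pos hu

lemma pPow_of_nonpos {u : ℝ} (hu : u ≤ 0) (κ : ℝ) : pPow κ u = 0 := if_neg hu.not_gt

lemma pPow_nonneg (κ u : ℝ) : 0 ≤ pPow κ u := by
  rcases le_or_gt u 0 with hu | hu
  · rw [pPow_of_nonpos hu]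
  · rw [pPow_of_pos hu]; exact rpow_nonneg hu.le κ

lemma pPow_rpow {α : ℝ} (hα : 0 < α) (κ u : ℝ) : pPow κ u ^ α = pPow (κ * α) u := by
  rcases le_or_gt u 0 with hu | hu
  · rw [pPow_of_nonpos hu, pPow_of_nonpos hu, zero_rpow hα.ne']
  · rw [pPow_of_pos hu, pPow_of_pos hu, ← rpow_mul hu.le]

lemma pPow_eq_indicator_Ioc {p R v : ℝ} (hv : v ≤ R) :
    pPow p v = (Set.Ioc 0 R).indicator (· ^ p) v := by
  rcases le_or_gt v 0 with h | h
  · rw [pPow_of_nonpos h, Set.indicator_of_notMem fun hm : v ∈ Set.Ioc 0 R => h.not_gt hm.1]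
  · rw [pPow_of_pos h, Set.indicator_of_mem (Set.mem_Ioc.2 ⟨h, hv⟩)]

lemma add_rpow_le_two_rpow_mul {α p q : ℝ} (hα : 0 ≤ α) (hp : 0 ≤ p) (hq : 0 ≤ q) :
    (p + q) ^ α ≤ 2 ^ α * (p ^ α + q ^ α) := by
  wlog hpq : p ≤ q generalizing p q
  · rw [add_comm p, add_comm (p ^ α)]; exact this hq hp (le_of_not_ge hpq)
  calc (p + q) ^ α ≤ (2 * q) ^ α := rpow_le_rpow (by positivity) (by linarith) hα
    _ = 2 ^ α * q ^ α := mul_rpow zero_le_two hq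
    _ ≤ 2 ^ α * (p ^ α + q ^ α) := by
      gcongr; exact le_add_of_nonneg_left (rpow_nonneg hp α)

lemma max_one_rpow_le {α s : ℝ} (hs : 0 ≤ s) : max 1 s ^ α ≤ 1 + s ^ α := by
  rcases le_total 1 s with h | h
  · rw [max_eq_right h]; linarith
  · rw [max_eq_left h, one_rpow]; linarith [rpow_nonneg hs α]

lemma min_two_mul_le_two_mul_max_mul_min {s L : ℝ} (hL : 0 ≤ L) :
    min 2 (s * L) ≤ 2 * (max 1 s * min 1 L) := by
  rcases le_total L 1 with h | h
  · rw [min_eq_right h]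
    calc min 2 (s * L) ≤ s * L := min_le_right _ _
      _ ≤ max 1 s * L := by gcongr; exact le_max_right _ _
      _ ≤ 2 * (max 1 s * L) := by nlinarith [le_max_left 1 s]
  · rw [min_eq_left h, mul_one]
    linarith [min_le_left 2 (s * L), le_max_left 1 s]

lemma abs_cos_sub_cos_le_min (a b : ℝ) : |cos a - cos b| ≤ min 2 |a - b| :=
  le_min ((abs_sub _ _).trans (by linarith [abs_cos_le_one a, abs_cos_le_one b]))
    (abs_cos_sub_cos_le a b)

lemma abs_add_sub_le_of_hasDerivAt_of_two_abs_le {f f' : ℝ → ℝ} {t u B : ℝ}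
    (h : 2 * |t| ≤ u)
    (hf : ∀ x, u / 2 ≤ x → HasDerivAt f (f' x) x) (hB : ∀ x, u / 2 ≤ x → |f' x| ≤ B) :
    |f (t + u) - f u| ≤ B * |t| := by
  simpa using Convex.norm_image_sub_le_of_norm_hasDerivWithin_le
    (fun x hx => (hf x hx).hasDerivWithinAt) hB (convex_Ici (u / 2))
    (Set.mem_Ici.2 (by linarith [abs_nonneg t] : u / 2 ≤ u))
    (Set.mem_Ici.2 (by linarith [neg_abs_le t] : u / 2 ≤ t + u))

lemma abs_rpow_add_sub_rpow_le {κ t u : ℝ} (hκ : κ ≤ 1) (h : 2 * |t| < u) :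
    |(t + u) ^ κ - u ^ κ| ≤ |κ| * (u / 2) ^ (κ - 1) * |t| := by
  have hu : 0 < u / 2 := by linarith [abs_nonneg t]
  refine abs_add_sub_le_of_hasDerivAt_of_two_abs_le h.le
    (fun x hx => hasDerivAt_rpow_const (Or.inl (hu.trans_le hx).ne')) fun x hx => ?_
  rw [abs_mul, abs_of_nonneg (rpow_nonneg (hu.le.trans hx) _)]
  exact mul_le_mul_of_nonneg_left (rpow_le_rpow_of_nonpos hu hx (by linarith)) (abs_nonneg κ)

lemma abs_log_add_sub_log_le {t u : ℝ} (h : 2 * |t| < u) :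
    |log (t + u) - log u| ≤ 2 * |t| / u := by
  have hu : 0 < u / 2 := by linarith [abs_nonneg t]
  have := abs_add_sub_le_of_hasDerivAt_of_two_abs_le (f := log) (B := (u / 2)⁻¹) h.le
    (fun x hx => hasDerivAt_log (hu.trans_le hx).ne') fun x hx => by
      rw [abs_inv, abs_of_pos (hu.trans_le hx)]; exact inv_anti₀ hu hx
  rwa [inv_div, div_mul_eq_mul_div] at this

lemma integrable_indicator_Ioc_rpow {p R : ℝ} (hp : -1 < p) (hR : 0 < R) :
    Integrable ((Set.Ioc 0 R).indicator (· ^ p)) :=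
  ((intervalIntegrable_iff_integrableOn_Ioc_of_le hR.le).1
    (intervalIntegral.intervalIntegrable_rpow' hp)).integrable_indicator measurableSet_Ioc

lemma lintegral_lt_top_of_le_pPow_of_le_rpow {f : ℝ → ENNReal} {p q t M C D : ℝ}
    (hp : -1 < p) (hq : q < -1) (hM : 0 < M) (hC : 0 ≤ C)
    (hloc : ∀ u ≤ M, f u ≤ ENNReal.ofReal (C * (pPow p (t + u) + pPow p u)))
    (htail : ∀ u, M < u → f u ≤ ENNReal.ofReal (D * u ^ q)) :
    ∫⁻ u, f u < ⊤ := by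
  set φ := (Set.Ioc 0 (M + |t|)).indicator (· ^ p)
  set ψ := (Set.Ioi M).indicator (· ^ q)
  have hφ : Integrable φ := integrable_indicator_Ioc_rpow hp (by positivity)
  have hψ : Integrable ψ :=
    (integrableOn_Ioi_rpow_of_lt hq hM).integrable_indicator measurableSet_Ioi
  have hφ_eq : ∀ v ≤ M + |t|, φ v = pPow p v := fun v hv => (pPow_eq_indicator_Ioc hv).symm
  have hφ_nonneg : ∀ v, 0 ≤ φ v :=
    Set.indicator_nonneg fun v hv => rpow_nonneg (Set.mem_Ioc.1 hv).1.le p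
  have hg : Integrable fun u => C * (φ (t + u) + φ u) + D * ψ u :=
    (((hφ.comp_add_left t).add hφ).const_mul C).add (hψ.const_mul D)
  refine lt_of_le_of_lt (lintegral_mono fun u => ?_) hg.lintegral_lt_top
  rcases le_or_gt u M with hu | hu
  · rw [show ψ u = 0 from Set.indicator_of_notMem (Set.notMem_Ioi.2 hu) _, mul_zero, add_zero,
      hφ_eq _ (by linarith [le_abs_self t]), hφ_eq _ (by linarith [abs_nonneg t])]
    exact hloc u hu
  · rw [show ψ u = u ^ q from Set.indicator_of_mem (Set.mem_Ioi.2 hu) _]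
    refine (htail u hu).trans (ENNReal.ofReal_le_ofReal (le_add_of_nonneg_left ?_))
    exact mul_nonneg hC (add_nonneg (hφ_nonneg _) (hφ_nonneg _))

/-- Up to the factor `2 max(1, |z|)`, this dominates the integrand uniformly in `v`. Capping the
logarithmic term by `1` keeps it integrable near `u = 0` and `u = -t`. -/
noncomputable def incrementMajorant (κ t u : ℝ) : ℝ :=
  |pPow κ (t + u) - pPow κ u| + min 1 |log (abs (t + u)) - log (abs u)| * pPow κ u

lemma incrementMajorant_nonneg (κ t u : ℝ) : 0 ≤ incrementMajorant κ t u :=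
  add_nonneg (abs_nonneg _) (mul_nonneg (le_min zero_le_one (abs_nonneg _)) (pPow_nonneg κ u))

lemma incrementMajorant_rpow_le {α κ : ℝ} (hα : 0 < α) (t u : ℝ) :
    incrementMajorant κ t u ^ α ≤ 4 ^ α * (pPow (κ * α) (t + u) + pPow (κ * α) u) := by
  have hX := pPow_nonneg κ (t + u)
  have hY := pPow_nonneg κ u
  have hle : incrementMajorant κ t u ≤ 2 * (pPow κ (t + u) + pPow κ u) := by
    have h1 : |pPow κ (t + u) - pPow κ u| ≤ pPow κ (t + u) + pPow κ u := by
      rw [abs_le]; constructor <;> linarith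
    have h2 : min 1 |log (abs (t + u)) - log (abs u)| * pPow κ u ≤ pPow κ u :=
      mul_le_of_le_one_left hY (min_le_left _ _)
    unfold incrementMajorant; linarith
  calc incrementMajorant κ t u ^ α ≤ (2 * (pPow κ (t + u) + pPow κ u)) ^ α :=
        rpow_le_rpow (incrementMajorant_nonneg κ t u) hle hα.le
    _ = 2 ^ α * (pPow κ (t + u) + pPow κ u) ^ α := mul_rpow zero_le_two (by positivity)
    _ ≤ 2 ^ α * (2 ^ α * (pPow κ (t + u) ^ α + pPow κ u ^ α)) := by
        gcongr; exact add_rpow_le_two_rpow_mul hα.le hX hY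
    _ = 4 ^ α * (pPow (κ * α) (t + u) + pPow (κ * α) u) := by
        rw [pPow_rpow hα, pPow_rpow hα, ← mul_assoc, ← mul_rpow zero_le_two zero_le_two]
        norm_num

lemma incrementMajorant_le_of_two_abs_lt {κ t u : ℝ} (hκ : κ ≤ 1) (h : 2 * |t| < u) :
    incrementMajorant κ t u ≤ (|κ| / 2 ^ (κ - 1) + 2) * |t| * u ^ (κ - 1) := by
  have hu : 0 < u := by linarith [abs_nonneg t]
  have htu : 0 < t + u := by linarith [neg_abs_le t]
  have hlog : min 1 |log (abs (t + u)) - log (abs u)| * u ^ κ ≤ 2 * |t| * u ^ (κ - 1) := by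
    rw [abs_of_pos htu, abs_of_pos hu, rpow_sub_one hu.ne']
    calc min 1 |log (t + u) - log u| * u ^ κ ≤ 2 * |t| / u * u ^ κ :=
          mul_le_mul_of_nonneg_right ((min_le_right _ _).trans (abs_log_add_sub_log_le h))
            (rpow_nonneg hu.le κ)
      _ = 2 * |t| * (u ^ κ / u) := by ring
  have hpow : |(t + u) ^ κ - u ^ κ| ≤ |κ| / 2 ^ (κ - 1) * |t| * u ^ (κ - 1) := by
    have := abs_rpow_add_sub_rpow_le hκ h
    rw [div_rpow hu.le zero_le_two] at this
    exact this.trans_eq (by ring)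
  unfold incrementMajorant
  rw [pPow_of_pos htu, pPow_of_pos hu]
  linarith

lemma lintegral_incrementMajorant_rpow_lt_top {α κ : ℝ} (t : ℝ) (hα : 0 < α)
    (hκ : -1 < κ * α) (hκ' : (κ - 1) * α < -1) :
    ∫⁻ u, ENNReal.ofReal (incrementMajorant κ t u ^ α) < ⊤ := by
  have hκ1 : κ ≤ 1 := by nlinarith
  refine lintegral_lt_top_of_le_pPow_of_le_rpow hκ hκ' (M := 2 * |t| + 1)
    (D := ((|κ| / 2 ^ (κ - 1) + 2) * |t|) ^ α) (by positivity)
    (by positivity) (fun u _ => ENNReal.ofReal_le_ofReal (incrementMajorant_rpow_le hα t u))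
    fun u hu => ENNReal.ofReal_le_ofReal ?_
  have hu : 0 < u := by linarith [abs_nonneg t]
  calc incrementMajorant κ t u ^ α ≤ ((|κ| / 2 ^ (κ - 1) + 2) * |t| * u ^ (κ - 1)) ^ α :=
        rpow_le_rpow (incrementMajorant_nonneg κ t u)
          (incrementMajorant_le_of_two_abs_lt hκ1 (by linarith)) hα.le
    _ = ((|κ| / 2 ^ (κ - 1) + 2) * |t|) ^ α * u ^ ((κ - 1) * α) := by
        rw [mul_rpow (by positivity) (rpow_nonneg hu.le _), ← rpow_mul hu.le]

lemma abs_cos_mul_pPow_sub_le (κ t z v u : ℝ) :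
    |cos (v + z * log |t + u|) * pPow κ (t + u) - cos (v + z * log |u|) * pPow κ u|
      ≤ 2 * max 1 |z| * incrementMajorant κ t u := by
  set L := |log (abs (t + u)) - log (abs u)|
  set X := pPow κ (t + u)
  set Y := pPow κ u
  have hY : 0 ≤ Y := pPow_nonneg κ u
  have hcos : |cos (v + z * log |t + u|) - cos (v + z * log |u|)| ≤ 2 * (max 1 |z| * min 1 L) :=
    calc _ ≤ min 2 |v + z * log |t + u| - (v + z * log |u|)| := abs_cos_sub_cos_le_min _ _
      _ = min 2 (|z| * L) := by rw [← abs_mul]; ring_nf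
      _ ≤ 2 * (max 1 |z| * min 1 L) := min_two_mul_le_two_mul_max_mul_min (abs_nonneg _)
  have hm : 1 ≤ max 1 |z| := le_max_left _ _
  calc |cos (v + z * log |t + u|) * X - cos (v + z * log |u|) * Y|
      = |cos (v + z * log |t + u|) * (X - Y)
          + (cos (v + z * log |t + u|) - cos (v + z * log |u|)) * Y| := by ring_nf
    _ ≤ |X - Y| + 2 * (max 1 |z| * min 1 L) * Y := by
        refine (abs_add_le _ _).trans (add_le_add ?_ ?_)
        · rw [abs_mul]; exact mul_le_of_le_one_left (abs_nonneg _) (abs_cos_le_one _)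
        · rw [abs_mul, abs_of_nonneg hY]; exact mul_le_mul_of_nonneg_right hcos hY
    _ ≤ 2 * max 1 |z| * incrementMajorant κ t u := by
        unfold incrementMajorant
        nlinarith [abs_nonneg (X - Y), mul_nonneg (le_min zero_le_one (abs_nonneg L)) hY]

lemma ofReal_abs_cos_mul_pPow_sub_rpow_le {α : ℝ} (hα : 0 < α) (κ t z v u : ℝ) :
    ENNReal.ofReal
        (|cos (v + z * log |t + u|) * pPow κ (t + u) - cos (v + z * log |u|) * pPow κ u| ^ α)
      ≤ ENNReal.ofReal (2 ^ α) * ENNReal.ofReal (1 + |z| ^ α)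
          * ENNReal.ofReal (incrementMajorant κ t u ^ α) := by
  rw [← ENNReal.ofReal_mul (by positivity), ← ENNReal.ofReal_mul (by positivity)]
  refine ENNReal.ofReal_le_ofReal ?_
  calc _ ≤ (2 * max 1 |z| * incrementMajorant κ t u) ^ α :=
        rpow_le_rpow (abs_nonneg _) (abs_cos_mul_pPow_sub_le κ t z v u) hα.le
    _ = 2 ^ α * max 1 |z| ^ α * incrementMajorant κ t u ^ α := by
        rw [mul_rpow (by positivity) (incrementMajorant_nonneg κ t u),
          mul_rpow zero_le_two (by positivity)]
    _ ≤ 2 ^ α * (1 + |z| ^ α) * incrementMajorant κ t u ^ α := by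
        gcongr
        · exact rpow_nonneg (incrementMajorant_nonneg κ t u) α
        · exact max_one_rpow_le (abs_nonneg z)

theorem stmt3_general (α H κ t : ℝ) (hα0 : 0 < α)
    (hH0 : 0 < H) (hH1 : H < 1) (hκ : κ = H - 1 / α)
    (lam : Measure ℝ) [IsFiniteMeasure lam]
    (hmom : ∫⁻ z, ENNReal.ofReal (|z| ^ α) ∂lam < ⊤) :
    ∫⁻ z, (∫⁻ v in Set.Ioo (0:ℝ) (2 * π), ∫⁻ u : ℝ,
        ENNReal.ofReal (|Real.cos (v + z * Real.log |t + u|) * pPow κ (t + u)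
          - Real.cos (v + z * Real.log |u|) * pPow κ u| ^ α)) ∂lam < ⊤ := by
  have hκα : κ * α = H * α - 1 := by rw [hκ]; field_simp
  have hu := lintegral_incrementMajorant_rpow_lt_top (κ := κ) t hα0 (by nlinarith) (by nlinarith)
  have hz : ∫⁻ z, ENNReal.ofReal (1 + |z| ^ α) ∂lam < ⊤ := by
    simp_rw [ENNReal.ofReal_add zero_le_one (rpow_nonneg (abs_nonneg _) α), ENNReal.ofReal_one]
    rw [lintegral_add_left measurable_const, lintegral_one]
    exact ENNReal.add_lt_top.2 ⟨measure_lt_top lam _, hmom⟩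
  have hv : volume (Set.Ioo (0:ℝ) (2 * π)) ≠ ⊤ := measure_Ioo_lt_top.ne
  calc _ ≤ ∫⁻ z, (∫⁻ v in Set.Ioo (0:ℝ) (2 * π), ∫⁻ u, ENNReal.ofReal (2 ^ α)
          * ENNReal.ofReal (1 + |z| ^ α)
          * ENNReal.ofReal (incrementMajorant κ t u ^ α)) ∂lam :=
        lintegral_mono fun z => lintegral_mono fun v => lintegral_mono fun u =>
          ofReal_abs_cos_mul_pPow_sub_rpow_le hα0 κ t z v u
    _ = ENNReal.ofReal (2 ^ α) * volume (Set.Ioo (0:ℝ) (2 * π))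
          * (∫⁻ u, ENNReal.ofReal (incrementMajorant κ t u ^ α))
          * ∫⁻ z, ENNReal.ofReal (1 + |z| ^ α) ∂lam := by
        rw [← lintegral_const_mul' _ _ (by finiteness [hu.ne])]
        refine lintegral_congr fun z => ?_
        rw [lintegral_const_mul' _ _ (by finiteness), setLIntegral_const]
        ring
    _ < ⊤ := by finiteness [hu.ne, hz.ne]

theorem stmt3 (α H κ t : ℝ) (hα0 : 0 < α) (hα2 : α < 2)
    (hH0 : 0 < H) (hH1 : H < 1) (hκ : κ = H - 1 / α)
    (lam : Measure ℝ) [IsFiniteMeasure lam]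
    (hmom : ∫⁻ z, ENNReal.ofReal (|z| ^ α) ∂lam < ⊤) :
    ∫⁻ z, (∫⁻ v in Set.Ioo (0:ℝ) (2 * π), ∫⁻ u : ℝ,
        ENNReal.ofReal (|Real.cos (v + z * Real.log |t + u|) * pPow κ (t + u)
          - Real.cos (v + z * Real.log |u|) * pPow κ u| ^ α)) ∂lam < ⊤ :=
  stmt3_general α H κ t hα0 hH0 hH1 hκ lam hmom
end

section
/- Let κ∈ℝ, q>0, b₁∈{−1,1}, F₁,F₂:[0,q)→ℝ, F₃∈ℝ, and let G be the associated PFSM kernel. Fix v∈ℝ. Then the following are equivalent: (a) there exist a sequence (cₙ) of positive reals with cₙ≠1 for all n and cₙ→1, and reals aₙ, bₙ≠0, dₙ such that for every n, G(v, cₙu) = bₙ·G(v, u+aₙ) + dₙ for Lebesgue-almost every u∈ℝ; (b) the same statement holds with v replaced by 0, i.e. there exist a sequence (c̃ₙ) of positive reals with c̃ₙ≠1 and c̃ₙ→1, and reals ãₙ, b̃ₙ≠0, d̃ₙ such that for every n, G(0, c̃ₙu) = b̃ₙ·G(0, u+ãₙ) + d̃ₙ for Lebesgue-almost every u∈ℝ.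 -/
open MeasureTheory

/-- `{x}_a = x - a⌊x/a⌋`, the fractional part with period `a`. -/
noncomputable def fpart (a x : ℝ) : ℝ := x - a * ⌊x / a⌋

/-- `u₋^κ`. -/
noncomputable def mPow (κ u : ℝ) : ℝ := if u ≤ 0 then |u| ^ κ else 0

/-- The PFSM kernel `G(v,u)` associated with `κ, q, b₁, F₁, F₂, F₃`. -/
noncomputable def pfsmKernel (κ q b₁ : ℝ) (F₁ F₂ : ℝ → ℝ) (F₃ : ℝ) (v u : ℝ) : ℝ :=
  if u = 0 then 0 else
    b₁ ^ ⌊(v + Real.log |u|) / q⌋ *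
      (F₁ (fpart q (v + Real.log |u|)) * pPow κ u
        + F₂ (fpart q (v + Real.log |u|)) * mPow κ u)
    + (if b₁ = 1 then (1:ℝ) else 0) * (if κ = 0 then (1:ℝ) else 0) * F₃ * Real.log |u|

/-!
Changing `v` amounts to rescaling the variable: since `log |e^s w| = s + log |w|`, the kernel
`G(v, ·)` at `e^s w` equals `e^{sκ} G(v + s, w)` plus the constant `F₃ s` from the logarithmic
term (present only when `κ = 0`, where `e^{sκ} = 1`). The family of near-identity affine
self-similarities in (a) and (b) is invariant under such affine changes of the kernel: the
dilations `cₙ` are unchanged, the shifts `aₙ` and constants `dₙ` are transported, and a dilation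
of the variable preserves Lebesgue-null sets.
-/

def HasAffineSelfSimilaritiesNearOne (G : ℝ → ℝ) : Prop :=
  ∃ c a b d : ℕ → ℝ, (∀ n, 0 < c n) ∧ (∀ n, c n ≠ 1) ∧
    Filter.Tendsto c Filter.atTop (nhds 1) ∧ (∀ n, b n ≠ 0) ∧
    ∀ n, ∀ᵐ u : ℝ ∂volume, G (c n * u) = b n * G (u + a n) + d n

namespace HasAffineSelfSimilaritiesNearOne

variable {G H : ℝ → ℝ} {t lam C : ℝ}

theorem of_affine (ht : t ≠ 0) (hrel : ∀ w ≠ 0, G (t * w) = lam * H w + C)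
    (hH : HasAffineSelfSimilaritiesNearOne H) : HasAffineSelfSimilaritiesNearOne G := by
  obtain ⟨c, a, b, d, hc, hc1, hct, hb, hae⟩ := hH
  refine ⟨c, fun n => t * a n, b, fun n => lam * d n + C * (1 - b n),
    hc, hc1, hct, hb, fun n => ?_⟩
  have hscaled : ∀ᵐ w : ℝ ∂volume,
      G (c n * (t * w)) = b n * G (t * w + t * a n) + (lam * d n + C * (1 - b n)) := by
    filter_upwards [hae n, Measure.ae_ne volume 0, Measure.ae_ne volume (-a n)]
      with w hw hw0 hwa
    rw [mul_left_comm, ← mul_add, hrel _ (mul_ne_zero (hc n).ne' hw0),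
      hrel _ (by rwa [← sub_neg_eq_add, sub_ne_zero]), hw]
    ring
  filter_upwards [(Measure.quasiMeasurePreserving_smul volume (inv_ne_zero ht)).ae hscaled]
    with u hu
  simpa only [smul_eq_mul, mul_inv_cancel_left₀ ht] using hu

theorem iff_of_affine (ht : t ≠ 0) (hlam : lam ≠ 0)
    (hrel : ∀ w ≠ 0, G (t * w) = lam * H w + C) :
    HasAffineSelfSimilaritiesNearOne G ↔ HasAffineSelfSimilaritiesNearOne H := by
  refine ⟨of_affine (inv_ne_zero ht) (lam := lam⁻¹) (C := -(C / lam)) fun w hw => ?_,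
    of_affine ht hrel⟩
  have h := hrel _ (mul_ne_zero (inv_ne_zero ht) hw)
  rw [mul_inv_cancel_left₀ ht] at h
  rw [h]
  field_simp
  ring

end HasAffineSelfSimilaritiesNearOne

theorem pPow_mul_of_pos (κ : ℝ) {t : ℝ} (ht : 0 < t) (w : ℝ) :
    pPow κ (t * w) = t ^ κ * pPow κ w := by
  by_cases hw : 0 < w
  · simp [pPow, hw, ht, Real.mul_rpow ht.le hw.le]
  · simp [pPow, hw, mul_pos_iff_of_pos_left ht]

theorem mPow_mul_of_pos (κ : ℝ) {t : ℝ} (ht : 0 < t) (w : ℝ) :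
    mPow κ (t * w) = t ^ κ * mPow κ w := by
  by_cases hw : w ≤ 0
  · simp [mPow, hw, mul_nonpos_iff_pos_imp_nonpos, ht.le, abs_mul, abs_of_pos ht,
      Real.mul_rpow ht.le (abs_nonneg w)]
  · simp [mPow, hw, mul_nonpos_iff, ht.not_ge]

theorem log_abs_exp_mul (s : ℝ) {w : ℝ} (hw : w ≠ 0) :
    Real.log |Real.exp s * w| = s + Real.log |w| := by
  rw [abs_mul, Real.abs_exp, Real.log_mul (Real.exp_pos s).ne' (abs_ne_zero.mpr hw),
    Real.log_exp]

theorem pfsmKernel_exp_mul (κ q b₁ : ℝ) (F₁ F₂ : ℝ → ℝ) (F₃ v s : ℝ) {w : ℝ} (hw : w ≠ 0) :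
    pfsmKernel κ q b₁ F₁ F₂ F₃ v (Real.exp s * w)
      = Real.exp (s * κ) * pfsmKernel κ q b₁ F₁ F₂ F₃ (v + s) w
        + (if b₁ = 1 then (1:ℝ) else 0) * (if κ = 0 then (1:ℝ) else 0) * F₃ * s := by
  have hsw : Real.exp s * w ≠ 0 := mul_ne_zero (Real.exp_pos s).ne' hw
  simp only [pfsmKernel, if_neg hw, if_neg hsw, log_abs_exp_mul s hw, ← add_assoc,
    pPow_mul_of_pos κ (Real.exp_pos s), mPow_mul_of_pos κ (Real.exp_pos s), ← Real.exp_mul]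
  by_cases hκ : κ = 0
  · simp only [hκ, mul_zero, Real.exp_zero]
    ring
  · simp only [hκ, if_false]
    ring

theorem stmt4_general (κ q b₁ : ℝ)
    (F₁ F₂ : ℝ → ℝ) (F₃ : ℝ) (v : ℝ) :
    (∃ c a b d : ℕ → ℝ, (∀ n, 0 < c n) ∧ (∀ n, c n ≠ 1) ∧
        Filter.Tendsto c Filter.atTop (nhds 1) ∧ (∀ n, b n ≠ 0) ∧
        ∀ n, ∀ᵐ u : ℝ ∂volume,
          pfsmKernel κ q b₁ F₁ F₂ F₃ v (c n * u)
            = b n * pfsmKernel κ q b₁ F₁ F₂ F₃ v (u + a n) + d n)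
    ↔
    (∃ c a b d : ℕ → ℝ, (∀ n, 0 < c n) ∧ (∀ n, c n ≠ 1) ∧
        Filter.Tendsto c Filter.atTop (nhds 1) ∧ (∀ n, b n ≠ 0) ∧
        ∀ n, ∀ᵐ u : ℝ ∂volume,
          pfsmKernel κ q b₁ F₁ F₂ F₃ 0 (c n * u)
            = b n * pfsmKernel κ q b₁ F₁ F₂ F₃ 0 (u + a n) + d n) := by
  have hrel : ∀ w ≠ 0, pfsmKernel κ q b₁ F₁ F₂ F₃ 0 (Real.exp v * w)
      = Real.exp (v * κ) * pfsmKernel κ q b₁ F₁ F₂ F₃ v w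
        + (if b₁ = 1 then (1:ℝ) else 0) * (if κ = 0 then (1:ℝ) else 0) * F₃ * v := by
    intro w hw
    simpa only [zero_add] using pfsmKernel_exp_mul κ q b₁ F₁ F₂ F₃ 0 v hw
  exact (HasAffineSelfSimilaritiesNearOne.iff_of_affine (Real.exp_pos v).ne'
    (Real.exp_pos _).ne' hrel).symm

theorem stmt4 (κ q b₁ : ℝ) (hq : 0 < q) (hb : b₁ = 1 ∨ b₁ = -1)
    (F₁ F₂ : ℝ → ℝ) (F₃ : ℝ) (v : ℝ) :
    (∃ c a b d : ℕ → ℝ, (∀ n, 0 < c n) ∧ (∀ n, c n ≠ 1) ∧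
        Filter.Tendsto c Filter.atTop (nhds 1) ∧ (∀ n, b n ≠ 0) ∧
        ∀ n, ∀ᵐ u : ℝ ∂volume,
          pfsmKernel κ q b₁ F₁ F₂ F₃ v (c n * u)
            = b n * pfsmKernel κ q b₁ F₁ F₂ F₃ v (u + a n) + d n)
    ↔
    (∃ c a b d : ℕ → ℝ, (∀ n, 0 < c n) ∧ (∀ n, c n ≠ 1) ∧
        Filter.Tendsto c Filter.atTop (nhds 1) ∧ (∀ n, b n ≠ 0) ∧
        ∀ n, ∀ᵐ u : ℝ ∂volume,
          pfsmKernel κ q b₁ F₁ F₂ F₃ 0 (c n * u)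
            = b n * pfsmKernel κ q b₁ F₁ F₂ F₃ 0 (u + a n) + d n) :=
  stmt4_general κ q b₁ F₁ F₂ F₃ v
end

section
/- For every z∈ℝ with z≠0 and all h, k ∈ ℝ, it is NOT the case that cos(z·v) = h·fract(v + k) for Lebesgue-almost every v∈ℝ. -/
open MeasureTheory

theorem stmt8 (z : ℝ) (hz : z ≠ 0) (h k : ℝ) :
    ¬ (∀ᵐ v : ℝ ∂volume, Real.cos (z * v) = h * Int.fract (v + k)) := by
  intro hae
  set f : ℝ → ℝ := fun v => h * Int.fract (v + k) with hf
  have hper : Function.Periodic f 1 := fun v => by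
    simp [hf, add_right_comm v 1 k, Int.fract_add_one]
  have hmeas : Measurable f := (measurable_fract.comp (measurable_id.add_const k)).const_mul h
  have hint : ∀ t₁ t₂ : ℝ, IntervalIntegrable f volume t₁ t₂ := by
    intro t₁ t₂
    refine (intervalIntegrable_const (c := |h|)).mono_fun hmeas.aestronglyMeasurable ?_
    refine Filter.Eventually.of_forall fun x => ?_
    simp only [hf, Real.norm_eq_abs, abs_mul]
    have h0 : |Int.fract (x + k)| ≤ 1 := by
      rw [abs_of_nonneg (Int.fract_nonneg _)]
      exact (Int.fract_lt_one _).le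
    calc |h| * |Int.fract (x + k)| ≤ |h| * 1 := by
          exact mul_le_mul_of_nonneg_left h0 (abs_nonneg h)
      _ = |h| := mul_one _
      _ ≤ |(|h|)| := (abs_abs h).symm.le
  -- interval integrals of the two sides agree
  have hcongr : ∀ a b : ℝ, (∫ v in a..b, Real.cos (z * v)) = ∫ v in a..b, f v := fun a b =>
    intervalIntegral.integral_congr_ae (hae.mono fun x hx _ => hx)
  -- explicit value of the cosine integral
  have hcos : ∀ a b : ℝ, (∫ v in a..b, Real.cos (z * v))
      = z⁻¹ * (Real.sin (z * b) - Real.sin (z * a)) := by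
    intro a b
    rw [intervalIntegral.integral_comp_mul_left _ hz, integral_cos, smul_eq_mul]
  -- value of ∫₀¹ f
  have hae1 : ∀ᵐ x : ℝ ∂volume, x ≠ 1 := by
    rw [MeasureTheory.ae_iff]
    simpa using measure_singleton (1 : ℝ)
  have hfract01 : (∫ v in (0:ℝ)..1, Int.fract v) = 1 / 2 := by
    have : (∫ v in (0:ℝ)..1, Int.fract v) = ∫ v in (0:ℝ)..1, v := by
      refine intervalIntegral.integral_congr_ae (hae1.mono fun x hx hmem => ?_)
      rw [Set.uIoc_of_le (by norm_num : (0:ℝ) ≤ 1)] at hmem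
      exact Int.fract_eq_self.2 ⟨hmem.1.le, lt_of_le_of_ne hmem.2 hx⟩
    rw [this, integral_id]
    norm_num
  have hC : (∫ v in (0:ℝ)..1, f v) = h / 2 := by
    have h1 : (∫ v in (0:ℝ)..1, f v) = h * ∫ v in (0:ℝ)..1, Int.fract (v + k) := by
      simp [hf, intervalIntegral.integral_const_mul]
    have h2 : (∫ v in (0:ℝ)..1, Int.fract (v + k)) = ∫ v in k..(1 + k), Int.fract v := by
      simpa using intervalIntegral.integral_comp_add_right (a := (0:ℝ)) (b := 1) Int.fract k
    have h3 : (∫ v in k..(k + 1), Int.fract v) = ∫ v in (0:ℝ)..(0 + 1), Int.fract v :=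
      (Int.fract_periodic ℝ).intervalIntegral_add_eq k 0
    rw [h1, h2, add_comm 1 k, h3, zero_add, hfract01]
    ring
  -- integral over [0, n]
  have hn : ∀ n : ℕ, (∫ v in (0:ℝ)..(n:ℝ), f v) = n * (h / 2) := by
    intro n
    have := hper.intervalIntegral_add_zsmul_eq (n : ℤ) 0 hint
    simp only [zero_add, zsmul_eq_mul, Int.cast_natCast, mul_one] at this
    rw [this, hC]
  -- conclude h = 0
  have hbound : ∀ n : ℕ, |(n : ℝ) * (h / 2)| ≤ 2 / |z| := by
    intro n
    have := (hn n).symm.trans ((hcongr 0 (n:ℝ)).symm.trans (hcos 0 (n:ℝ)))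
    rw [this]
    rw [abs_mul, abs_inv]
    have hs : |Real.sin (z * n) - Real.sin (z * 0)| ≤ 2 := by
      calc |Real.sin (z * n) - Real.sin (z * 0)|
          ≤ |Real.sin (z * n)| + |Real.sin (z * 0)| := abs_sub _ _
        _ ≤ 1 + 1 := add_le_add (abs_le.mpr ⟨Real.neg_one_le_sin _, Real.sin_le_one _⟩) (abs_le.mpr ⟨Real.neg_one_le_sin _, Real.sin_le_one _⟩)
        _ = 2 := by norm_num
    rw [div_eq_inv_mul]
    exact mul_le_mul_of_nonneg_left hs (inv_nonneg.2 (abs_nonneg z))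
  have hh0 : h = 0 := by
    by_contra hh
    obtain ⟨n, hn'⟩ := exists_nat_gt ((2 / |z|) / (|h| / 2))
    have hhpos : 0 < |h| / 2 := by positivity
    have := hbound n
    rw [abs_mul, abs_div, Nat.abs_cast] at this
    have : (n : ℝ) * (|h| / 2) ≤ 2 / |z| := by simpa [abs_of_nonneg] using this
    have h2 : (2 / |z|) / (|h| / 2) < n := hn'
    rw [div_lt_iff₀ hhpos] at h2
    linarith
  -- now cos (z v) = 0 a.e., contradiction
  have hzero : ∀ b : ℝ, z⁻¹ * (Real.sin (z * b) - Real.sin (z * 0)) = 0 := by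
    intro b
    rw [← hcos 0 b, hcongr 0 b]
    have : (∫ v in (0:ℝ)..b, f v) = ∫ v in (0:ℝ)..b, (0:ℝ) := by
      refine intervalIntegral.integral_congr_ae (Filter.Eventually.of_forall fun x _ => ?_)
      simp [hf, hh0]
    rw [this, intervalIntegral.integral_zero]
  have := hzero (Real.pi / (2 * z))
  rw [mul_zero, Real.sin_zero, sub_zero] at this
  have hzz : z * (Real.pi / (2 * z)) = Real.pi / 2 := by
    field_simp
  rw [hzz, Real.sin_pi_div_two, mul_one] at this
  exact hz (inv_eq_zero.mp this)
end

section
/- Let κ∈ℝ and q>0, and let G and G̃ be PFSM kernels with the same κ and q, G with parameters b₁∈{−1,1}, F₁,F₂:[0,q)→ℝ, F₃∈ℝ and G̃ with parameters b̃₁∈{−1,1}, F̃₁,F̃₂:[0,q)→ℝ, F̃₃∈ℝ. Suppose there are h≠0, k>0 and g, j ∈ ℝ such that G(0,u) = h·G̃(0, k·u + g) + j for Lebesgue-almost every u∈ℝ. Then for every v∈[0,q) there exists a constant c(v)∈ℝ such that G(v,u) = h·k^κ·b̃₁^{[v+ln k]_q}·G̃( {v+ln k}_q, u + e^{−v}k^{−1}g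 ) + c(v) for Lebesgue-almost every u∈ℝ. -/
open MeasureTheory

lemma pPow_scale (κ v u : ℝ) : pPow κ (Real.exp v * u) = Real.exp (v * κ) * pPow κ u := by
  unfold pPow
  by_cases h0 : 0 < u
  · rw [if_pos (mul_pos (Real.exp_pos v) h0), if_pos h0,
      Real.mul_rpow (Real.exp_pos v).le h0.le, ← Real.exp_mul]
  · rw [if_neg (fun hc => h0 ((mul_pos_iff_of_pos_left (Real.exp_pos v)).1 hc)),
      if_neg h0, mul_zero]

lemma mPow_scale (κ v u : ℝ) : mPow κ (Real.exp v * u) = Real.exp (v * κ) * mPow κ u := by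
  unfold mPow
  have hcond : Real.exp v * u ≤ 0 ↔ u ≤ 0 := by
    constructor
    · intro hc
      by_contra hpos
      exact absurd (mul_pos (Real.exp_pos v) (lt_of_not_ge hpos)) (not_lt.2 hc)
    · intro hc; exact mul_nonpos_of_nonneg_of_nonpos (Real.exp_pos v).le hc
  by_cases h0 : u ≤ 0
  · rw [if_pos (hcond.2 h0), if_pos h0, abs_mul, abs_of_pos (Real.exp_pos v),
      Real.mul_rpow (Real.exp_pos v).le (abs_nonneg u), ← Real.exp_mul]
  · rw [if_neg (fun hc => h0 (hcond.1 hc)), if_neg h0, mul_zero]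

lemma pfsm_scale (κ q b : ℝ) (F₁ F₂ : ℝ → ℝ) (F₃ : ℝ) (v u : ℝ) (hu : u ≠ 0) :
    pfsmKernel κ q b F₁ F₂ F₃ v u
      = Real.exp (-(v * κ)) * pfsmKernel κ q b F₁ F₂ F₃ 0 (Real.exp v * u)
        - (if b = 1 then (1:ℝ) else 0) * (if κ = 0 then (1:ℝ) else 0) * F₃ * v := by
  have hE : Real.exp v ≠ 0 := (Real.exp_pos v).ne'
  have hEu : Real.exp v * u ≠ 0 := mul_ne_zero hE hu
  have hlog : Real.log |Real.exp v * u| = v + Real.log |u| := by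
    rw [abs_mul, abs_of_pos (Real.exp_pos v), Real.log_mul hE (abs_ne_zero.2 hu), Real.log_exp]
  unfold pfsmKernel
  rw [if_neg hu, if_neg hEu, hlog, zero_add, pPow_scale, mPow_scale]
  by_cases hκ : κ = 0
  · subst hκ
    simp only [mul_zero, Real.exp_zero, neg_zero, if_pos rfl]
    ring
  · simp only [if_neg hκ, mul_zero, zero_mul, mul_one, add_zero, sub_zero]
    have hE1 : Real.exp (-(v * κ)) * Real.exp (v * κ) = 1 := by
      rw [← Real.exp_add]; simp
    linear_combination (-(b ^ ⌊(v + Real.log |u|) / q⌋) *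
      (F₁ (fpart q (v + Real.log |u|)) * pPow κ u
        + F₂ (fpart q (v + Real.log |u|)) * mPow κ u)) * hE1

lemma pfsm_shift (κ q b : ℝ) (hq : 0 < q) (hb : b = 1 ∨ b = -1) (F₁ F₂ : ℝ → ℝ) (F₃ : ℝ)
    (x : ℝ) (m : ℤ) (u : ℝ) :
    pfsmKernel κ q b F₁ F₂ F₃ (x + q * m) u = b ^ m * pfsmKernel κ q b F₁ F₂ F₃ x u := by
  by_cases hu : u = 0
  · simp [pfsmKernel, hu]
  have hb0 : b ≠ 0 := by rcases hb with h | h <;> rw [h] <;> norm_num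
  have hdiv : (x + q * m + Real.log |u|) / q = (x + Real.log |u|) / q + m := by
    field_simp
    ring
  have hfl : ⌊(x + q * m + Real.log |u|) / q⌋ = ⌊(x + Real.log |u|) / q⌋ + m := by
    rw [hdiv, Int.floor_add_intCast]
  have hfp : fpart q (x + q * m + Real.log |u|) = fpart q (x + Real.log |u|) := by
    unfold fpart
    rw [hfl]; push_cast; ring
  unfold pfsmKernel
  rw [if_neg hu, if_neg hu, hfl, hfp, zpow_add₀ hb0]
  rcases hb with h | h
  · subst h; simp only [one_zpow, if_pos rfl]; ring
  · subst h; rw [if_neg (by norm_num : (-1 : ℝ) ≠ 1)]; ring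

theorem stmt10 (κ q b₁ tb₁ : ℝ) (hq : 0 < q)
    (hb : b₁ = 1 ∨ b₁ = -1) (htb : tb₁ = 1 ∨ tb₁ = -1)
    (F₁ F₂ : ℝ → ℝ) (F₃ : ℝ) (tF₁ tF₂ : ℝ → ℝ) (tF₃ : ℝ)
    (h k g j : ℝ) (hh : h ≠ 0) (hk : 0 < k)
    (heq : ∀ᵐ u : ℝ ∂volume,
      pfsmKernel κ q b₁ F₁ F₂ F₃ 0 u
        = h * pfsmKernel κ q tb₁ tF₁ tF₂ tF₃ 0 (k * u + g) + j) :
    ∀ v ∈ Set.Ico (0:ℝ) q, ∃ c : ℝ, ∀ᵐ u : ℝ ∂volume,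
      pfsmKernel κ q b₁ F₁ F₂ F₃ v u
        = h * k ^ κ * tb₁ ^ ⌊(v + Real.log k) / q⌋ *
            pfsmKernel κ q tb₁ tF₁ tF₂ tF₃ (fpart q (v + Real.log k))
              (u + Real.exp (-v) * k⁻¹ * g) + c := by
  intro v _
  set s : ℝ := v + Real.log k with hs_def
  set m : ℤ := ⌊s / q⌋ with hm_def
  set w : ℝ := fpart q s with hw_def
  have hane : ∀ a : ℝ, ∀ᵐ u : ℝ ∂volume, u ≠ a := by
    intro a
    rw [ae_iff]
    have : {u : ℝ | ¬ u ≠ a} = {a} := by ext x; simp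
    rw [this]; exact Real.volume_singleton
  have qmp : Measure.QuasiMeasurePreserving (fun u : ℝ => Real.exp v * u) volume volume := by
    refine ⟨measurable_const_mul _, ?_⟩
    rw [Real.map_volume_mul_left (Real.exp_pos v).ne']
    exact Measure.smul_absolutelyContinuous
  have heq' := qmp.ae heq
  refine ⟨h * k ^ κ * ((if tb₁ = 1 then (1:ℝ) else 0) * (if κ = 0 then (1:ℝ) else 0)) * tF₃ * s
      + Real.exp (-(v * κ)) * j
      - (if b₁ = 1 then (1:ℝ) else 0) * (if κ = 0 then (1:ℝ) else 0) * F₃ * v, ?_⟩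
  filter_upwards [heq', hane 0, hane (-(Real.exp (-v) * k⁻¹ * g))] with u hu hu0 hu0'
  have hu' : u + Real.exp (-v) * k⁻¹ * g ≠ 0 := by
    intro hc; exact hu0' (by linarith)
  set u' : ℝ := u + Real.exp (-v) * k⁻¹ * g with hu'_def
  have key : k * (Real.exp v * u) + g = Real.exp s * u' := by
    rw [hu'_def, hs_def, Real.exp_add, Real.exp_log hk, Real.exp_neg]
    field_simp
  have h1 := pfsm_scale κ q b₁ F₁ F₂ F₃ v u hu0
  have h2 := pfsm_scale κ q tb₁ tF₁ tF₂ tF₃ s u' hu'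
  have h3 : pfsmKernel κ q tb₁ tF₁ tF₂ tF₃ s u' = tb₁ ^ m * pfsmKernel κ q tb₁ tF₁ tF₂ tF₃ w u' := by
    have hsw : s = w + q * m := by rw [hw_def, hm_def]; unfold fpart; ring
    rw [hsw] at h2 ⊢
    exact pfsm_shift κ q tb₁ hq htb tF₁ tF₂ tF₃ w m u'
  rw [hu, key] at h1
  have h23 := h3.symm.trans h2
  set X := pfsmKernel κ q tb₁ tF₁ tF₂ tF₃ 0 (Real.exp s * u') with hX
  set Y := pfsmKernel κ q tb₁ tF₁ tF₂ tF₃ w u' with hY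
  rw [h1]
  have hks : Real.exp (-(v * κ)) * Real.exp (s * κ) = k ^ κ := by
    rw [← Real.exp_add, Real.rpow_def_of_pos hk]
    congr 1
    rw [hs_def]; ring
  have hinv : Real.exp (-(s * κ)) * Real.exp (s * κ) = 1 := by
    rw [← Real.exp_add]; simp
  by_cases hκ : κ = 0
  · subst hκ
    simp only [mul_zero, neg_zero, Real.exp_zero, Real.rpow_zero, if_pos rfl,
      mul_one, one_mul] at h23 ⊢
    linear_combination (-h) * h23
  · have hE1 : Real.exp (-(v * κ)) = k ^ κ * Real.exp (-(s * κ)) := by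
      calc Real.exp (-(v * κ)) = Real.exp (-(v * κ)) * (Real.exp (-(s * κ)) * Real.exp (s * κ)) := by
            rw [hinv, mul_one]
        _ = k ^ κ * Real.exp (-(s * κ)) := by rw [← hks]; ring
    simp only [if_neg hκ, mul_zero, zero_mul, mul_one, add_zero, sub_zero] at h23 ⊢
    linear_combination h * X * hE1 - h * k ^ κ * h23
end

section
/- Let (X,𝒳,μ) and (Y,𝒴,ν) be σ-finite measure spaces, and let Φ:Y→X, S:X→X, T:Y→Y be measurable bijections with measurable inverses such that S∘Φ = Φ∘T. Define the measures μ_Φ on Y by μ_Φ(B) = μ(Φ(B)) and μ_S on X by μ_S(A) = μ(S(A)). Assume: T preserves ν (ν(T⁻¹(B)) = ν(B) for all measurable B), μ_S is absolutely continuous with respect to μ, and μ_Φ and ν are mutually absolutely continuous. Then for ν-almost every y∈Y, (dμ_S/dμ)(Φ(y)) = ((dμ_Φ/dν)(y))⁻¹ · (dμ_Φ/dν)(T(y)). -/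
open MeasureTheory

theorem stmt16 {X Y : Type*} [MeasurableSpace X] [MeasurableSpace Y]
    (μ : Measure X) (ν : Measure Y) [SigmaFinite μ] [SigmaFinite ν]
    (Φ : Y ≃ᵐ X) (S : X ≃ᵐ X) (T : Y ≃ᵐ Y)
    (hcomm : ∀ y, S (Φ y) = Φ (T y))
    (hT : ν.map T = ν)
    (hS : μ.map S.symm ≪ μ)
    (h1 : μ.map Φ.symm ≪ ν) (h2 : ν ≪ μ.map Φ.symm) :
    ∀ᵐ y ∂ν, (μ.map S.symm).rnDeriv μ (Φ y)
      = ((μ.map Φ.symm).rnDeriv ν y)⁻¹ * (μ.map Φ.symm).rnDeriv ν (T y) := by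
  set lam : Measure Y := μ.map Φ.symm with hlam
  have heΦ : MeasurableEmbedding (Φ.symm : X → Y) := Φ.symm.measurableEmbedding
  have heT : MeasurableEmbedding (T.symm : Y → Y) := T.symm.measurableEmbedding
  have hSf : SigmaFinite (μ.map S.symm) := S.symm.measurableEmbedding.sigmaFinite_map
  have hlamf : SigmaFinite lam := heΦ.sigmaFinite_map
  have hlamTf : SigmaFinite (lam.map T.symm) := heT.sigmaFinite_map
  -- ν is invariant under T.symm
  have hTsymm : ν.map T.symm = ν := by
    conv_lhs => rw [← hT]
    rw [Measure.map_map T.symm.measurable T.measurable]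
    simp
  -- key commutation on measures
  have hmap : (μ.map S.symm).map Φ.symm = lam.map T.symm := by
    rw [hlam, Measure.map_map Φ.symm.measurable S.symm.measurable,
      Measure.map_map T.symm.measurable Φ.symm.measurable]
    congr 1
    funext x
    have h := hcomm (T.symm (Φ.symm x))
    simp only [MeasurableEquiv.apply_symm_apply] at h
    simp only [Function.comp_apply]
    have h2x := congrArg S.symm h
    simp only [MeasurableEquiv.symm_apply_apply] at h2x
    rw [← h2x, MeasurableEquiv.symm_apply_apply]
  -- step 1: g (Φ y) = (lam.map T.symm).rnDeriv lam y, ν-a.e.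
  have step1 : ∀ᵐ y ∂ν, (μ.map S.symm).rnDeriv μ (Φ y)
      = (lam.map T.symm).rnDeriv lam y := by
    have h := heΦ.rnDeriv_map (μ.map S.symm) μ
    rw [hmap] at h
    -- h : (fun x ↦ (lam.map T.symm).rnDeriv lam (Φ.symm x)) =ᵐ[μ] (μ.map S.symm).rnDeriv μ
    have h' : ∀ᵐ y ∂lam, (μ.map S.symm).rnDeriv μ (Φ y)
        = (lam.map T.symm).rnDeriv lam y := by
      rw [hlam, heΦ.ae_map_iff]
      filter_upwards [h] with x hx
      simpa using hx.symm
    exact h2 h'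
  -- abs continuities
  have hνT : ν.map T.symm ≪ lam := by rw [hTsymm]; exact h2
  have hlamT : lam.map T.symm ≪ lam := (h1.map T.symm.measurable).trans hνT
  -- step 2: f (T y) = (lam.map T.symm).rnDeriv lam y * f y, ν-a.e.
  have step2 : ∀ᵐ y ∂ν, lam.rnDeriv ν (T y)
      = (lam.map T.symm).rnDeriv lam y * lam.rnDeriv ν y := by
    have hchain := Measure.rnDeriv_mul_rnDeriv (κ := ν) hlamT
    have h := heT.rnDeriv_map lam ν
    rw [hTsymm] at h
    -- h : (fun y ↦ (lam.map T.symm).rnDeriv ν (T.symm y)) =ᵐ[ν] lam.rnDeriv ν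
    have h'' : ∀ᵐ y ∂ν, (lam.map T.symm).rnDeriv ν (T.symm (T y))
        = lam.rnDeriv ν (T y) := by
      exact (T.measurableEmbedding.ae_map_iff
        (p := fun z => (lam.map T.symm).rnDeriv ν (T.symm z) = lam.rnDeriv ν z)).mp
        (by rw [hT]; exact h)
    have h' : ∀ᵐ y ∂ν, (lam.map T.symm).rnDeriv ν y = lam.rnDeriv ν (T y) := by
      filter_upwards [h''] with y hy
      simpa using hy
    filter_upwards [hchain, h'] with y hy hy'
    rw [← hy', ← hy]
    rfl
  have hpos : ∀ᵐ y ∂ν, 0 < lam.rnDeriv ν y := h2 (Measure.rnDeriv_pos h1)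
  have hfin : ∀ᵐ y ∂ν, lam.rnDeriv ν y < ⊤ := lam.rnDeriv_lt_top ν
  filter_upwards [step1, step2, hpos, hfin] with y h1' h2' hp hf
  rw [h1', h2']
  rw [mul_comm ((lam.rnDeriv ν y)⁻¹), mul_assoc, ENNReal.mul_inv_cancel hp.ne' hf.ne, mul_one]
end
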